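/- Let n be odd, 1 ≤ i ≤ n−1 and (a,b) ∈ ℂ² with (a,b) ≠ (0,0). The swap automorphism τ fixes the ideal I_i(a,b) (i.e. τ(I_i(a,b)) = I_i(a,b)) if and only if I_i(a,b) = ⟨x^{(n+1)/2}, y^{(n+1)/2}, xy⟩; equivalently, if and only if either 2i = n−1 and a = 0, or 2i = n+1 and b = 0. Thus for odd n there is a unique τ-fixed point on the exceptional locus of ℤ_n-Hilb(ℂ²), namely I_{(n−1)/2}(0:1) = I_{(n+1)/2}(1:0). -/

import Mathlib

open MvPolynomial

/-- The algebra automorphism `τ : x ↦ y, y ↦ x` of `ℂ[x,y]`. -/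
noncomputable def tauA : MvPolynomial (Fin 2) ℂ →ₐ[ℂ] MvPolynomial (Fin 2) ℂ :=
  aeval ![X 1, X 0]

/-- The Ito–Nakamura ideal `I_i(a,b) = ⟨a·xⁱ − b·y^{n−i}, x^{i+1}, xy, y^{n+1−i}⟩`. -/
noncomputable def itoNak (n i : ℕ) (a b : ℂ) : Ideal (MvPolynomial (Fin 2) ℂ) :=
  Ideal.span
    {C a * X 0 ^ i - C b * X 1 ^ (n - i), X 0 ^ (i + 1), X 0 * X 1, X 1 ^ (n + 1 - i)}

/-!
The swap τ sends the generators `x^{i+1}` and `y^{n+1-i}` of `I = I_i(a,b)` to `y^{i+1}` and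
`x^{n+1-i}`. As `n` is odd, `i + 1 ≤ n - i` or `n + 1 - i ≤ i`, so a τ-stable `I` contains a pure
power of `y` of degree `≤ n - i` or a pure power of `x` of degree `≤ i`. This is impossible except
in the boundary case: every `f ∈ I` has no monomial `x^k` (`k < i`) or `y^k` (`k < n - i`) and
satisfies `b·[xⁱ]f + a·[y^{n-i}]f = 0`, since these linear conditions define an ideal
(multiplication by `x` or `y` pushes the coefficients on the axes outwards) which contains the
generators of `I`. Hence `2i = n - 1, a = 0` or `2i = n + 1, b = 0`, and in both cases
`I = ⟨x^m, y^m, xy⟩` with `m = (n+1)/2`, an ideal that τ visibly fixes.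
-/

open Finsupp

namespace MvPolynomial

variable {σ R : Type*} [CommSemiring R]

theorem mul_mem_of_forall_X_mul_mem {S : Submodule R (MvPolynomial σ R)}
    (hX : ∀ i, ∀ f ∈ S, X i * f ∈ S) (c : MvPolynomial σ R) {f : MvPolynomial σ R}
    (hf : f ∈ S) : c * f ∈ S := by
  induction c using MvPolynomial.induction_on generalizing f with
  | C r => rw [C_mul']; exact S.smul_mem r hf
  | add p q hp hq => rw [add_mul]; exact S.add_mem (hp hf) (hq hf)
  | mul_X p i hp => rw [mul_assoc]; exact hp (hX i f hf)

theorem coeff_single_succ_X_mul (i : σ) (k : ℕ) (f : MvPolynomial σ R) :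
    coeff (single i (k + 1)) (X i * f) = coeff (single i k) f := by
  rw [single_add, add_comm, coeff_X_mul]

theorem coeff_X_mul_of_apply_eq_zero {m : σ →₀ ℕ} {i : σ} (hi : m i = 0)
    (f : MvPolynomial σ R) : coeff m (X i * f) = 0 := by
  classical
  rw [coeff_X_mul', if_neg (by simpa using hi)]

theorem coeff_single_X_zero_mul_X_one (j : Fin 2) (k : ℕ) :
    coeff (single j k) (X 0 * X 1 : MvPolynomial (Fin 2) R) = 0 := by
  fin_cases j
  · rw [mul_comm]; exact coeff_X_mul_of_apply_eq_zero (by simp) _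
  · exact coeff_X_mul_of_apply_eq_zero (by simp) _

end MvPolynomial

theorem Ideal.span_insert_eq_of_dvd {α : Type*} [CommSemiring α] {s : Set α} {f g : α}
    (hg : g ∈ s) (hgf : g ∣ f) : Ideal.span (insert f s) = Ideal.span s :=
  Submodule.span_insert_eq_span (Ideal.mem_of_dvd _ hgf (Ideal.subset_span hg))

theorem Ideal.span_insert_unit_mul {α : Type*} [CommSemiring α] {u : α} (hu : IsUnit u)
    (g : α) (s : Set α) : Ideal.span (insert (u * g) s) = Ideal.span (insert g s) := by
  rw [Ideal.span_insert, Ideal.span_singleton_mul_left_unit hu, ← Ideal.span_insert]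

section AxisCoeff

variable {R : Type*} [CommRing R]

def axisCoeffSubmodule (p q : ℕ) (a b : R) : Submodule R (MvPolynomial (Fin 2) R) where
  carrier := {f | (∀ k < p, coeff (single 0 k) f = 0) ∧ (∀ k < q, coeff (single 1 k) f = 0) ∧
    b * coeff (single 0 p) f + a * coeff (single 1 q) f = 0}
  add_mem' := by
    rintro f g ⟨hf₀, hf₁, hf⟩ ⟨hg₀, hg₁, hg⟩
    refine ⟨fun k hk => ?_, fun k hk => ?_, ?_⟩
    · simp [hf₀ k hk, hg₀ k hk]
    · simp [hf₁ k hk, hg₁ k hk]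
    · simp only [coeff_add]
      linear_combination hf + hg
  zero_mem' := by simp
  smul_mem' := by
    rintro r f ⟨hf₀, hf₁, hf⟩
    refine ⟨fun k hk => ?_, fun k hk => ?_, ?_⟩
    · simp [hf₀ k hk]
    · simp [hf₁ k hk]
    · simp only [coeff_smul, smul_eq_mul]
      linear_combination r * hf

theorem X_mul_mem_axisCoeffSubmodule {p q : ℕ} {a b : R} (i : Fin 2)
    {f : MvPolynomial (Fin 2) R} (hf : f ∈ axisCoeffSubmodule p q a b) :
    X i * f ∈ axisCoeffSubmodule p q a b := by
  obtain ⟨hf₀, hf₁, hf⟩ := hf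
  have shift : ∀ j : Fin 2, ∀ k, (∀ l < k, coeff (single j l) f = 0) →
      ∀ l ≤ k, coeff (single j l) (X i * f) = 0 := by
    intro j k h l hl
    by_cases hij : i = j
    · subst hij
      cases l with
      | zero => exact coeff_X_mul_of_apply_eq_zero (by simp) f
      | succ l => rw [coeff_single_succ_X_mul]; exact h l (by omega)
    · exact coeff_X_mul_of_apply_eq_zero (by simp [Ne.symm hij]) f
  refine ⟨fun k hk => shift 0 p hf₀ k hk.le, fun k hk => shift 1 q hf₁ k hk.le, ?_⟩
  rw [shift 0 p hf₀ p le_rfl, shift 1 q hf₁ q le_rfl, mul_zero, mul_zero, add_zero]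

def axisCoeffIdeal (p q : ℕ) (a b : R) : Ideal (MvPolynomial (Fin 2) R) where
  __ := axisCoeffSubmodule p q a b
  smul_mem' c _ hf :=
    mul_mem_of_forall_X_mul_mem (fun i _ => X_mul_mem_axisCoeffSubmodule i) c hf

theorem mem_axisCoeffIdeal {p q : ℕ} {a b : R} {f : MvPolynomial (Fin 2) R} :
    f ∈ axisCoeffIdeal p q a b ↔ (∀ k < p, coeff (single 0 k) f = 0) ∧
      (∀ k < q, coeff (single 1 k) f = 0) ∧
      b * coeff (single 0 p) f + a * coeff (single 1 q) f = 0 :=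
  Iff.rfl

variable [Nontrivial R]

theorem eq_and_eq_zero_of_X_zero_pow_mem_axisCoeffIdeal {p q k : ℕ} {a b : R} (hp : 0 < p)
    (hk : k ≤ p) (h : X 0 ^ k ∈ axisCoeffIdeal p q a b) : k = p ∧ b = 0 := by
  obtain ⟨h₀, -, hb⟩ := mem_axisCoeffIdeal.1 h
  rcases hk.lt_or_eq with hlt | rfl
  · simpa [coeff_X_pow] using h₀ k hlt
  · simpa [coeff_X_pow, single_eq_single_iff, hp.ne'] using hb

theorem eq_and_eq_zero_of_X_one_pow_mem_axisCoeffIdeal {p q k : ℕ} {a b : R} (hq : 0 < q)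
    (hk : k ≤ q) (h : X 1 ^ k ∈ axisCoeffIdeal p q a b) : k = q ∧ a = 0 := by
  obtain ⟨-, h₁, ha⟩ := mem_axisCoeffIdeal.1 h
  rcases hk.lt_or_eq with hlt | rfl
  · simpa [coeff_X_pow] using h₁ k hlt
  · simpa [coeff_X_pow, single_eq_single_iff, hq.ne'] using ha

end AxisCoeff

noncomputable def cornerIdeal {R : Type*} [CommSemiring R] (m : ℕ) :
    Ideal (MvPolynomial (Fin 2) R) :=
  Ideal.span {X 0 ^ m, X 1 ^ m, X 0 * X 1}

theorem tauA_X_zero : tauA (X 0) = X 1 := by simp [tauA]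

theorem tauA_X_one : tauA (X 1) = X 0 := by simp [tauA]

theorem map_tauA_cornerIdeal (m : ℕ) : Ideal.map tauA (cornerIdeal m) = cornerIdeal m := by
  rw [cornerIdeal, Ideal.map_span, Set.image_insert_eq, Set.image_insert_eq, Set.image_singleton]
  simp only [map_pow, map_mul, tauA_X_zero, tauA_X_one]
  rw [mul_comm (X 1), Set.insert_comm]

theorem itoNak_le_axisCoeffIdeal {n i : ℕ} {a b : ℂ} (hi : 0 < i) (hin : i < n) :
    itoNak n i a b ≤ axisCoeffIdeal i (n - i) a b := by
  rw [itoNak, Ideal.span_le]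
  simp only [Set.insert_subset_iff, Set.singleton_subset_iff, SetLike.mem_coe, mem_axisCoeffIdeal]
  refine ⟨⟨?_, ?_, ?_⟩, ⟨?_, ?_, ?_⟩, ⟨?_, ?_, ?_⟩, ⟨?_, ?_, ?_⟩⟩ <;> intros <;>
    simp (disch := omega) [coeff_X_pow, single_eq_single_iff, coeff_single_X_zero_mul_X_one,
      if_neg, -Finsupp.single_tsub, -Finsupp.single_add]
  -- what remains is `b·a - a·b = 0`, the linear condition on `a·xⁱ - b·y^{n-i}`
  ring

theorem boundary_of_map_tauA_itoNak_eq {n i : ℕ} {a b : ℂ} (hn : Odd n) (hi : 0 < i)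
    (hin : i < n) (h : Ideal.map tauA (itoNak n i a b) = itoNak n i a b) :
    (2 * i = n - 1 ∧ a = 0) ∨ (2 * i = n + 1 ∧ b = 0) := by
  obtain ⟨m, hm⟩ := hn
  have swap_mem : ∀ f ∈ itoNak n i a b, tauA f ∈ axisCoeffIdeal i (n - i) a b := fun f hf =>
    itoNak_le_axisCoeffIdeal hi hin (h ▸ Ideal.mem_map_of_mem tauA hf)
  have hy := swap_mem (X 0 ^ (i + 1)) (Ideal.subset_span (by simp))
  have hx := swap_mem (X 1 ^ (n + 1 - i)) (Ideal.subset_span (by simp))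
  rw [map_pow, tauA_X_zero] at hy
  rw [map_pow, tauA_X_one] at hx
  rcases le_or_gt (i + 1) (n - i) with hle | hlt
  · obtain ⟨hk, ha⟩ := eq_and_eq_zero_of_X_one_pow_mem_axisCoeffIdeal (by omega) hle hy
    exact .inl ⟨by omega, ha⟩
  · obtain ⟨hk, hb⟩ := eq_and_eq_zero_of_X_zero_pow_mem_axisCoeffIdeal hi (by omega) hx
    exact .inr ⟨by omega, hb⟩

theorem itoNak_zero_left_eq_cornerIdeal {n i : ℕ} {b : ℂ} (hb : b ≠ 0) (hn : n = 2 * i + 1) :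
    itoNak n i 0 b = cornerIdeal (i + 1) := by
  subst hn
  have hu : IsUnit (C (-b) : MvPolynomial (Fin 2) ℂ) :=
    (isUnit_iff_ne_zero.2 (neg_ne_zero.2 hb)).map C
  have hgen : C 0 * X 0 ^ i - C b * X 1 ^ (i + 1) =
      C (-b) * (X 1 ^ (i + 1) : MvPolynomial (Fin 2) ℂ) := by
    simp
  rw [itoNak, show 2 * i + 1 - i = i + 1 by omega, show 2 * i + 1 + 1 - i = i + 1 + 1 by omega,
    hgen, Ideal.span_insert_unit_mul hu, Set.insert_comm, Set.pair_comm (X 0 * X 1),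
    Set.insert_comm (X 1 ^ (i + 1)), Set.insert_comm (X 0 ^ (i + 1)),
    Ideal.span_insert_eq_of_dvd (by simp) (pow_dvd_pow _ (i + 1).le_succ), cornerIdeal]

theorem itoNak_zero_right_eq_cornerIdeal {n i : ℕ} {a : ℂ} (ha : a ≠ 0) (hn : n + 1 = 2 * i) :
    itoNak n i a 0 = cornerIdeal i := by
  have hu : IsUnit (C a : MvPolynomial (Fin 2) ℂ) := (isUnit_iff_ne_zero.2 ha).map C
  rw [itoNak, show n + 1 - i = i by omega, C_0, zero_mul, sub_zero,
    Ideal.span_insert_unit_mul hu, Set.insert_comm,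
    Ideal.span_insert_eq_of_dvd (by simp) (pow_dvd_pow _ i.le_succ), cornerIdeal, Set.pair_comm]

theorem itoNak_eq_cornerIdeal_of_boundary {n i : ℕ} {a b : ℂ} (hab : ¬(a = 0 ∧ b = 0))
    (hi : 0 < i) (h : (2 * i = n - 1 ∧ a = 0) ∨ (2 * i = n + 1 ∧ b = 0)) :
    itoNak n i a b = cornerIdeal ((n + 1) / 2) := by
  rcases h with ⟨hn, rfl⟩ | ⟨hn, rfl⟩
  · rw [show (n + 1) / 2 = i + 1 by omega]
    exact itoNak_zero_left_eq_cornerIdeal (fun hb => hab ⟨rfl, hb⟩) (by omega)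
  · rw [show (n + 1) / 2 = i by omega]
    exact itoNak_zero_right_eq_cornerIdeal (fun ha => hab ⟨ha, rfl⟩) (by omega)

/-- for odd `n`, `τ` fixes `I_i(a,b)` iff
`I_i(a,b) = ⟨x^{(n+1)/2}, y^{(n+1)/2}, xy⟩`, iff `(2i = n−1 ∧ a = 0) ∨ (2i = n+1 ∧ b = 0)`. -/
theorem tau_fixed_points_odd (n : ℕ) (hodd : Odd n) :
    ∀ i : ℕ, 1 ≤ i → i ≤ n - 1 → ∀ a b : ℂ, ¬(a = 0 ∧ b = 0) →
      (Ideal.map tauA (itoNak n i a b) = itoNak n i a b ↔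
        itoNak n i a b =
          Ideal.span
            {(X 0 ^ ((n + 1) / 2) : MvPolynomial (Fin 2) ℂ), X 1 ^ ((n + 1) / 2),
              X 0 * X 1}) ∧
      (Ideal.map tauA (itoNak n i a b) = itoNak n i a b ↔
        (2 * i = n - 1 ∧ a = 0) ∨ (2 * i = n + 1 ∧ b = 0)) := by
  intro i hi hin a b hab
  have fixed_iff_boundary : Ideal.map tauA (itoNak n i a b) = itoNak n i a b ↔
      (2 * i = n - 1 ∧ a = 0) ∨ (2 * i = n + 1 ∧ b = 0) :=
    ⟨boundary_of_map_tauA_itoNak_eq hodd hi (by omega), fun h => by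
      rw [itoNak_eq_cornerIdeal_of_boundary hab hi h, map_tauA_cornerIdeal]⟩
  refine ⟨⟨fun h => itoNak_eq_cornerIdeal_of_boundary hab hi (fixed_iff_boundary.1 h),
    fun h => ?_⟩, fixed_iff_boundary⟩
  rw [h]
  exact map_tauA_cornerIdeal _
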